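/- arXiv:1611.08714 — 2 statements merged into one kernel-verified Lean document; each statement's English description precedes it below -/
import Mathlib

section
/- Dependence-testing bound (used in the proof of the achievability theorem): Let P_X be a probability distribution on a measurable input space 𝒳 and let P_{Y|X} be a Markov kernel to a measurable output space 𝒴. Assume the joint distribution P_{XY} is absolutely continuous with respect to the product P_X × P_Y, where P_Y is the induced output distribution, and define the information density i(x;y) = log( dP_{XY}/d(P_X × P_Y) )(x,y). Then for every integer M ≥ 1 there exists a code with M equiprobable messages (an encoder f: {1,…,M} → 𝒳 and a decoder g: 𝒴 → {1,…,M}) whose average error probability ε̄ satisfies ε̄ ≤ E[ exp( −[ i(X;Y) − log((M−1)/2) ]⁺ ) ], where the expectation is with respect to (X,Y) ~ P_{XY} and [a]⁺ = max{0, a}. -/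
/-!
Random coding with a threshold decoder. Let `Z = dP_{XY}/d(P_X × P_Y)` and `T = (M - 1)/2`. Draw
the codewords `c 0, …, c (M-1)` i.i.d. from `P_X` and decode `y` to the first `i` with
`Z (c i, y) > T`. Message `j` is missed only if `Z (c j, Y) ≤ T` or one of the `j` earlier
codewords passes the test. Averaged over the codebook, the first event has probability
`P_{XY} {Z ≤ T}`, and each of the others has probability `(P_X × P_Y) {Z > T}` because an
independent codeword is paired with `Y` as under `P_X × P_Y`. Summing over `j`, the average error
is at most `P_{XY} {Z ≤ T} + T (P_X × P_Y) {Z > T} = ∫ min (1, T / Z) dP_{XY}`, which is the stated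
expectation, and some codebook does at least as well as the average.
-/

open MeasureTheory ProbabilityTheory
open scoped ENNReal

namespace Fin

variable {n : ℕ}

open Classical in
noncomputable def findD (d : Fin n) (p : Fin n → Prop) : Fin n :=
  if h : ∃ i, p i then Fin.find p h else d

theorem findD_eq_of_forall_lt_not {d j : Fin n} {p : Fin n → Prop} (hj : p j)
    (hlt : ∀ i < j, ¬ p i) : findD d p = j := by
  classical
  rw [findD, dif_pos ⟨j, hj⟩, Fin.find_eq_iff]
  exact ⟨hj, hlt⟩

theorem measurable_findD (d : Fin n) : Measurable (findD d) := measurable_of_finite _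

end Fin

section Decoder

variable {𝒳 𝒴 : Type*} [MeasurableSpace 𝒴] {M : ℕ}

noncomputable def thresholdDecoder (Z : 𝒳 × 𝒴 → ℝ≥0∞) (T : ℝ≥0∞) (d : Fin M)
    (c : Fin M → 𝒳) (y : 𝒴) : Fin M :=
  Fin.findD d fun i => T < Z (c i, y)

variable {Z : 𝒳 × 𝒴 → ℝ≥0∞} {T : ℝ≥0∞} {d : Fin M} {c : Fin M → 𝒳}

theorem measurable_thresholdDecoder [MeasurableSpace 𝒳] (hZ : Measurable Z) :
    Measurable (thresholdDecoder Z T d c) :=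
  (Fin.measurable_findD d).comp <| measurable_pi_iff.2 fun _ =>
    measurableSet_setOfPred.1 (measurableSet_lt measurable_const (hZ.comp measurable_prodMk_left))

theorem measure_thresholdDecoder_ne_le (ν : Measure 𝒴) (j : Fin M) :
    ν {y | thresholdDecoder Z T d c y ≠ j} ≤
      ν {y | Z (c j, y) ≤ T} + ∑ i ∈ Finset.Iio j, ν {y | T < Z (c i, y)} := by
  calc ν {y | thresholdDecoder Z T d c y ≠ j}
      ≤ ν ({y | Z (c j, y) ≤ T} ∪ ⋃ i ∈ Finset.Iio j, {y | T < Z (c i, y)}) := by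
        refine measure_mono fun y hy => ?_
        by_contra h
        simp only [Set.mem_union, Set.mem_ofPred_eq, Set.mem_iUnion, Finset.mem_Iio, not_or,
          not_le, not_exists, not_lt] at h
        exact hy (Fin.findD_eq_of_forall_lt_not h.1 fun i hi => not_lt.2 (h.2 i hi))
    _ ≤ _ := (measure_union_le _ _).trans (add_le_add_right (measure_biUnion_finset_le _ _) _)

end Decoder

section RandomCodebook

variable {𝒳 𝒴 : Type*} [MeasurableSpace 𝒳] [MeasurableSpace 𝒴]
  (PX : Measure 𝒳) [IsProbabilityMeasure PX] {ι : Type*} [Fintype ι]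

theorem MeasureTheory.Measure.pi_map_eval_prod_eval {i j : ι} (hij : i ≠ j) :
    (Measure.pi fun _ : ι => PX).map (fun c => (c i, c j)) = PX.prod PX := by
  have hind := (iIndepFun_pi (μ := fun _ : ι => PX) (X := fun _ => id)
    fun _ => aemeasurable_id).indepFun hij
  rw [hind.map_prod_eq_prod_map_map (measurable_pi_apply i).aemeasurable
    (measurable_pi_apply j).aemeasurable, (measurePreserving_eval _ i).map_eq,
    (measurePreserving_eval _ j).map_eq]

variable (κ : Kernel 𝒳 𝒴) [IsSFiniteKernel κ] {s : Set (𝒳 × 𝒴)}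

theorem lintegral_pi_kernel_eval_eval (hs : MeasurableSet s) (j : ι) :
    ∫⁻ c, κ (c j) (Prod.mk (c j) ⁻¹' s) ∂(Measure.pi fun _ : ι => PX) = (PX ⊗ₘ κ) s := by
  rw [Measure.compProd_apply hs,
    ← (measurePreserving_eval (fun _ : ι => PX) j).lintegral_comp
      (Kernel.measurable_kernel_prodMk_left hs)]

theorem measurable_kernel_snd_prodMk_fst (hs : MeasurableSet s) :
    Measurable fun p : 𝒳 × 𝒳 => κ p.2 (Prod.mk p.1 ⁻¹' s) :=
  Kernel.measurable_kernel_prodMk_left (κ := Kernel.prodMkLeft 𝒳 κ)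
    (t := {q : (𝒳 × 𝒳) × 𝒴 | (q.1.1, q.2) ∈ s})
    (hs.preimage (measurable_fst.fst.prodMk measurable_snd))

theorem lintegral_pi_kernel_eval_of_ne (hs : MeasurableSet s) {i j : ι} (hij : i ≠ j) :
    ∫⁻ c, κ (c j) (Prod.mk (c i) ⁻¹' s) ∂(Measure.pi fun _ : ι => PX) =
      (PX.prod (κ ∘ₘ PX)) s := by
  calc ∫⁻ c, κ (c j) (Prod.mk (c i) ⁻¹' s) ∂(Measure.pi fun _ : ι => PX)
      = ∫⁻ p, κ p.2 (Prod.mk p.1 ⁻¹' s) ∂(PX.prod PX) := by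
        rw [← Measure.pi_map_eval_prod_eval PX hij, lintegral_map
          (measurable_kernel_snd_prodMk_fst κ hs)
          ((measurable_pi_apply i).prodMk (measurable_pi_apply j))]
    _ = ∫⁻ u, ∫⁻ v, κ v (Prod.mk u ⁻¹' s) ∂PX ∂PX :=
        lintegral_prod _ (measurable_kernel_snd_prodMk_fst κ hs).aemeasurable
    _ = (PX.prod (κ ∘ₘ PX)) s := by
        rw [Measure.prod_apply hs]
        refine lintegral_congr fun u => ?_
        rw [Measure.bind_apply (measurable_prodMk_left hs) κ.aemeasurable]

end RandomCodebook

theorem ENNReal.sum_fin_add_mul (M : ℕ) (a b : ℝ≥0∞) :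
    ∑ j : Fin M, (a + j * b) = M * (a + ENNReal.ofReal (((M : ℝ) - 1) / 2) * b) := by
  have hgauss : ∑ i ∈ Finset.range M, (i : ℝ) = M * ((M - 1) / 2) := by
    induction M with
    | zero => simp
    | succ n ih => rw [Finset.sum_range_succ, ih]; push_cast; ring
  have hsum : ∑ j : Fin M, (j : ℝ≥0∞) = M * ENNReal.ofReal (((M : ℝ) - 1) / 2) := by
    simp_rw [Fin.sum_univ_eq_sum_range (fun i => (i : ℝ≥0∞)) M, ← ENNReal.ofReal_natCast]
    rw [← ENNReal.ofReal_sum_of_nonneg fun i _ => Nat.cast_nonneg i, hgauss,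
      ENNReal.ofReal_mul (Nat.cast_nonneg M)]
  rw [Finset.sum_add_distrib, Finset.sum_const, Finset.card_univ, Fintype.card_fin, nsmul_eq_mul,
    ← Finset.sum_mul, hsum, mul_add, mul_assoc]

theorem one_div_mul_sum_toReal_le {M : ℕ} {a : Fin M → ℝ≥0∞} {B : ℝ≥0∞} (hB : B ≠ ∞)
    (h : ∑ j, a j ≤ M * B) : (1 / M : ℝ) * ∑ j, (a j).toReal ≤ B.toReal := by
  rcases M.eq_zero_or_pos with rfl | hM
  · simp
  have hMB : (M : ℝ≥0∞) * B ≠ ∞ := ENNReal.mul_ne_top (by simp) hB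
  have hsum := ENNReal.toReal_mono hMB h
  rw [ENNReal.toReal_sum fun j _ => ne_top_of_le_ne_top hMB
    ((Finset.single_le_sum (fun i _ => zero_le) (Finset.mem_univ j)).trans h)] at hsum
  rw [ENNReal.toReal_mul, ENNReal.toReal_natCast] at hsum
  rw [one_div, inv_mul_le_iff₀ (by exact_mod_cast hM)]
  exact hsum

theorem exists_codebook_sum_measure_thresholdDecoder_ne_le {𝒳 𝒴 : Type*} [MeasurableSpace 𝒳]
    [MeasurableSpace 𝒴] (PX : Measure 𝒳) [IsProbabilityMeasure PX] (κ : Kernel 𝒳 𝒴)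
    [IsSFiniteKernel κ] {Z : 𝒳 × 𝒴 → ℝ≥0∞} (hZ : Measurable Z) (T : ℝ≥0∞) {M : ℕ} (d : Fin M) :
    ∃ c : Fin M → 𝒳, ∑ j, κ (c j) {y | thresholdDecoder Z T d c y ≠ j} ≤
      ∑ j : Fin M, ((PX ⊗ₘ κ) {p | Z p ≤ T} + j * (PX.prod (κ ∘ₘ PX)) {p | T < Z p}) := by
  have hle : MeasurableSet {p | Z p ≤ T} := measurableSet_le hZ measurable_const
  have hlt : MeasurableSet {p | T < Z p} := measurableSet_lt measurable_const hZ
  have h_true : ∀ j : Fin M, Measurable fun c : Fin M → 𝒳 => κ (c j) {y | Z (c j, y) ≤ T} :=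
    fun j => (Kernel.measurable_kernel_prodMk_left hle).comp (measurable_pi_apply j)
  have h_other : ∀ i j : Fin M,
      Measurable fun c : Fin M → 𝒳 => κ (c j) {y | T < Z (c i, y)} := fun i j =>
    (measurable_kernel_snd_prodMk_fst κ hlt).comp (f := fun c : Fin M → 𝒳 => (c i, c j))
      ((measurable_pi_apply i).prodMk (measurable_pi_apply j))
  set E : (Fin M → 𝒳) → ℝ≥0∞ := fun c => ∑ j, (κ (c j) {y | Z (c j, y) ≤ T} +
    ∑ i ∈ Finset.Iio j, κ (c j) {y | T < Z (c i, y)})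
  have hE_meas : Measurable E := Finset.measurable_sum _ fun j _ =>
    (h_true j).fun_add (Finset.measurable_sum _ fun i _ => h_other i j)
  have hE_mean : ∫⁻ c, E c ∂(Measure.pi fun _ => PX) =
      ∑ j : Fin M, ((PX ⊗ₘ κ) {p | Z p ≤ T} + j * (PX.prod (κ ∘ₘ PX)) {p | T < Z p}) := by
    rw [lintegral_finsetSum _ fun j _ =>
      (h_true j).fun_add (Finset.measurable_sum _ fun i _ => h_other i j)]
    refine Finset.sum_congr rfl fun j _ => ?_
    rw [lintegral_add_left (h_true j), lintegral_finsetSum _ fun i _ => h_other i j]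
    congr 1
    · exact lintegral_pi_kernel_eval_eval PX κ hle j
    · refine (Finset.sum_congr rfl fun i hi =>
        lintegral_pi_kernel_eval_of_ne PX κ hlt (Finset.mem_Iio.1 hi).ne).trans ?_
      rw [Finset.sum_const, Fin.card_Iio, nsmul_eq_mul]
  obtain ⟨c, hc⟩ := exists_le_lintegral hE_meas.aemeasurable (μ := Measure.pi fun _ => PX)
  exact ⟨c, (Finset.sum_le_sum fun j _ => measure_thresholdDecoder_ne_le _ j).trans
    (hc.trans hE_mean.le)⟩

theorem Real.mul_exp_neg_max_zero_log_sub_log {r τ : ℝ} (hr : 0 ≤ r) (hτ : 0 < τ) :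
    r * exp (-(max 0 (log r - log τ))) = min r τ := by
  rcases hr.eq_or_lt with rfl | hr
  · simp [hτ.le]
  rcases le_total r τ with hrτ | hτr
  · rw [max_eq_left (sub_nonpos.2 (log_le_log hr hrτ)), neg_zero, exp_zero, mul_one,
      min_eq_left hrτ]
  · rw [max_eq_right (sub_nonneg.2 (log_le_log hτ hτr)), neg_sub, exp_sub, exp_log hτ,
      exp_log hr, mul_div_cancel₀ _ hr.ne', min_eq_right hτr]

theorem ENNReal.mul_ofReal_exp_neg_max_zero_log_sub_log {z : ℝ≥0∞} (hz : z ≠ ∞) {τ : ℝ}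
    (hτ : 0 < τ) :
    z * ENNReal.ofReal (Real.exp (-(max 0 (Real.log z.toReal - Real.log τ)))) =
      min z (ENNReal.ofReal τ) := by
  calc z * ENNReal.ofReal (Real.exp (-(max 0 (Real.log z.toReal - Real.log τ))))
      = ENNReal.ofReal z.toReal *
          ENNReal.ofReal (Real.exp (-(max 0 (Real.log z.toReal - Real.log τ)))) := by
        rw [ENNReal.ofReal_toReal hz]
    _ = ENNReal.ofReal (min z.toReal τ) := by
        rw [← ENNReal.ofReal_mul ENNReal.toReal_nonneg,
          Real.mul_exp_neg_max_zero_log_sub_log ENNReal.toReal_nonneg hτ]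
    _ = min z (ENNReal.ofReal τ) := by rw [ENNReal.ofReal_min, ENNReal.ofReal_toReal hz]

theorem lintegral_min_rnDeriv {α : Type*} [MeasurableSpace α] {μ ν : Measure α}
    [μ.HaveLebesgueDecomposition ν] (hμν : μ ≪ ν) (T : ℝ≥0∞) :
    ∫⁻ p, min (μ.rnDeriv ν p) T ∂ν =
      μ {p | μ.rnDeriv ν p ≤ T} + T * ν {p | T < μ.rnDeriv ν p} := by
  have hA : MeasurableSet {p | T < μ.rnDeriv ν p} :=
    measurableSet_lt measurable_const (Measure.measurable_rnDeriv μ ν)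
  have hle : MeasurableSet {p | μ.rnDeriv ν p ≤ T} :=
    measurableSet_le (Measure.measurable_rnDeriv μ ν) measurable_const
  have hAc : {p | T < μ.rnDeriv ν p}ᶜ = {p | μ.rnDeriv ν p ≤ T} := by
    ext p; simp
  have hA_int : ∫⁻ p in {p | T < μ.rnDeriv ν p}, min (μ.rnDeriv ν p) T ∂ν =
      T * ν {p | T < μ.rnDeriv ν p} := by
    rw [setLIntegral_congr_fun hA fun p hp => min_eq_right (le_of_lt hp), setLIntegral_const,
      mul_comm]
  have hAc_int : ∫⁻ p in {p | μ.rnDeriv ν p ≤ T}, min (μ.rnDeriv ν p) T ∂ν =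
      μ {p | μ.rnDeriv ν p ≤ T} := by
    rw [setLIntegral_congr_fun hle fun p hp => min_eq_left hp, ← withDensity_apply _ hle,
      Measure.withDensity_rnDeriv_eq μ ν hμν]
  rw [← lintegral_add_compl _ hA, hAc, hA_int, hAc_int, add_comm]

theorem integral_exp_neg_max_zero_log_rnDeriv_sub_log {α : Type*} [MeasurableSpace α]
    {μ ν : Measure α} [SigmaFinite μ] [SigmaFinite ν] (hμν : μ ≪ ν) {τ : ℝ} (hτ : 0 < τ) :
    ∫ p, Real.exp (-(max 0 (Real.log (μ.rnDeriv ν p).toReal - Real.log τ))) ∂μ =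
      (μ {p | μ.rnDeriv ν p ≤ ENNReal.ofReal τ} +
        ENNReal.ofReal τ * ν {p | ENNReal.ofReal τ < μ.rnDeriv ν p}).toReal := by
  have hmeas : Measurable fun p =>
      Real.exp (-(max 0 (Real.log (μ.rnDeriv ν p).toReal - Real.log τ))) := by
    have := Measure.measurable_rnDeriv μ ν
    fun_prop
  rw [integral_eq_lintegral_of_nonneg_ae (ae_of_all _ fun p => (Real.exp_pos _).le)
    hmeas.aestronglyMeasurable, ← lintegral_min_rnDeriv hμν,
    ← lintegral_rnDeriv_mul hμν hmeas.ennreal_ofReal.aemeasurable]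
  congr 1
  refine lintegral_congr_ae ?_
  filter_upwards [Measure.rnDeriv_lt_top μ ν] with p hp
  exact ENNReal.mul_ofReal_exp_neg_max_zero_log_sub_log hp.ne hτ

theorem dependence_testing_bound_general
    {𝒳 𝒴 : Type*} [MeasurableSpace 𝒳] [MeasurableSpace 𝒴]
    (PX : Measure 𝒳) [IsProbabilityMeasure PX]
    (κ : Kernel 𝒳 𝒴) [IsMarkovKernel κ]
    (h_ac : (PX ⊗ₘ κ) ≪ PX.prod ((PX ⊗ₘ κ).map Prod.snd))
    (M : ℕ) (hM : 0 < M) :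
    ∃ (f : Fin M → 𝒳) (g : 𝒴 → Fin M), Measurable g ∧
      (1 / M : ℝ) * ∑ j, ((κ (f j)) {y | g y ≠ j}).toReal ≤
        ∫ p, Real.exp (-(max 0
            (Real.log (((PX ⊗ₘ κ).rnDeriv (PX.prod ((PX ⊗ₘ κ).map Prod.snd)) p).toReal)
              - Real.log (((M : ℝ) - 1) / 2))))
          ∂(PX ⊗ₘ κ) := by
  rw [← Measure.snd, Measure.snd_compProd] at h_ac ⊢
  set Z := (PX ⊗ₘ κ).rnDeriv (PX.prod (κ ∘ₘ PX))
  set T := ENNReal.ofReal (((M : ℝ) - 1) / 2)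
  obtain ⟨c, hc⟩ := exists_codebook_sum_measure_thresholdDecoder_ne_le PX κ
    (Measure.measurable_rnDeriv _ _) T ⟨0, hM⟩
  refine ⟨c, thresholdDecoder Z T ⟨0, hM⟩ c,
    measurable_thresholdDecoder (Measure.measurable_rnDeriv _ _), ?_⟩
  -- For `M = 1` the threshold is `0` and `Real.log 0 = 0`, so the identity used below fails;
  -- instead, a single message is never decoded wrongly.
  obtain rfl | hM_two := (Nat.one_le_iff_ne_zero.2 hM.ne').eq_or_lt
  · simpa [Subsingleton.elim _ (0 : Fin 1)] using integral_nonneg fun p => (Real.exp_pos _).le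
  have hτ : 0 < ((M : ℝ) - 1) / 2 := by
    have : (1 : ℝ) < M := by exact_mod_cast hM_two
    linarith
  rw [ENNReal.sum_fin_add_mul] at hc
  rw [integral_exp_neg_max_zero_log_rnDeriv_sub_log h_ac hτ]
  exact one_div_mul_sum_toReal_le (by finiteness) hc

/-- dependence-testing bound: let `P_X` be an input distribution,
`P_{Y|X}` a Markov kernel, `P_{XY} = P_X ⊗ P_{Y|X}` the joint law and
`P_Y` the induced output law. If `P_{XY} ≪ P_X × P_Y`, with information density
`i(x;y) = log (dP_{XY}/d(P_X × P_Y))(x,y)`, then for every `M ≥ 1` there is a code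
(encoder `f`, measurable decoder `g`) whose average error probability satisfies
`ε̄ ≤ E[exp(−[i(X;Y) − log((M−1)/2)]⁺)]`. -/
theorem dependence_testing_bound
    {𝒳 𝒴 : Type*} [MeasurableSpace 𝒳] [MeasurableSpace 𝒴]
    [StandardBorelSpace 𝒳] [StandardBorelSpace 𝒴]
    (PX : Measure 𝒳) [IsProbabilityMeasure PX]
    (κ : Kernel 𝒳 𝒴) [IsMarkovKernel κ]
    (h_ac : (PX ⊗ₘ κ) ≪ PX.prod ((PX ⊗ₘ κ).map Prod.snd))
    (M : ℕ) (hM : 0 < M) :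
    ∃ (f : Fin M → 𝒳) (g : 𝒴 → Fin M), Measurable g ∧
      (1 / M : ℝ) * ∑ j, ((κ (f j)) {y | g y ≠ j}).toReal ≤
        ∫ p, Real.exp (-(max 0
            (Real.log (((PX ⊗ₘ κ).rnDeriv (PX.prod ((PX ⊗ₘ κ).map Prod.snd)) p).toReal)
              - Real.log (((M : ℝ) - 1) / 2))))
          ∂(PX ⊗ₘ κ) :=
  dependence_testing_bound_general PX κ h_ac M hM
end

section
/- Metaconverse bound (used in the proof of the converse theorem): Let P_{Y|X} be a Markov kernel from a measurable input space 𝒳 to a measurable output space 𝒴, and let Q_Y be any probability distribution on 𝒴. For α ∈ (0,1] and probability measures P, Q on 𝒴, let β_α(P,Q) = inf{ ∫ T dQ : T: 𝒴 → [0,1] measurable, ∫ T dP ≥ α } denote the minimum type-II error of a (randomized) binary hypothesis test between P and Q with type-I error at most 1−α. Then every code with M messages and maximal error probability ε ∈ (0,1) for the channel P_{Y|X} (encoder f, decoder g with Pr[g(Y) ≠ j | X = f(j)] ≤ ε for all j) satisfies inf_{j ∈ {1,…,M}} β_{1−ε}( P_{Y|X=f(j)}, Q_Y ) ≤ 1/M.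 -/
open MeasureTheory ProbabilityTheory
open scoped ENNReal BigOperators

noncomputable section

/-- `β_α(P, Q)`: the minimum type-II error `∫ T dQ` over randomized tests
`T : 𝒴 → [0,1]` with type-I error at most `1 − α` (i.e. `∫ T dP ≥ α`). -/
def betaFn {𝒴 : Type*} [MeasurableSpace 𝒴] (α : ℝ) (P Q : Measure 𝒴) : ℝ :=
  sInf { x | ∃ T : 𝒴 → ℝ, Measurable T ∧ (∀ y, T y ∈ Set.Icc (0 : ℝ) 1) ∧
    α ≤ ∫ y, T y ∂P ∧ x = ∫ y, T y ∂Q }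

/-! The decoding region of each message is a deterministic test between `P_{Y|X=f(j)}` and
`Q_Y`; since the regions partition `𝒴`, one of them has `Q_Y`-mass at most `1/M`. -/

section

variable {𝒴 : Type*} [MeasurableSpace 𝒴]

lemma betaFn_nonneg (α : ℝ) (P Q : Measure 𝒴) : 0 ≤ betaFn α P Q := by
  refine Real.sInf_nonneg fun x ⟨T, _, hT, _, hx⟩ => ?_
  exact hx ▸ integral_nonneg fun y => (hT y).1

lemma betaFn_le_measureReal {α : ℝ} {P Q : Measure 𝒴} {s : Set 𝒴} (hs : MeasurableSet s)
    (hα : α ≤ P.real s) : betaFn α P Q ≤ Q.real s := by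
  refine csInf_le ⟨0, fun x ⟨T, _, hT, _, hx⟩ => hx ▸ integral_nonneg fun y => (hT y).1⟩
    ⟨s.indicator 1, measurable_const.indicator hs, fun y => ?_, ?_, ?_⟩
  · by_cases hy : y ∈ s <;> simp [hy]
  · rwa [integral_indicator_one hs]
  · rw [integral_indicator_one hs]

lemma one_sub_le_measureReal_of_measure_compl_le {P : Measure 𝒴} [IsProbabilityMeasure P]
    {s : Set 𝒴} (hs : MeasurableSet s) {ε : ℝ} (hε : 0 ≤ ε) (h : P sᶜ ≤ ENNReal.ofReal ε) :
    1 - ε ≤ P.real s := by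
  have : P.real sᶜ ≤ ε := ENNReal.toReal_le_of_le_ofReal hε h
  rw [probReal_compl_eq_one_sub hs] at this
  linarith

lemma exists_measureReal_preimage_singleton_le {ι : Type*} [Fintype ι] [Nonempty ι]
    [MeasurableSpace ι] [MeasurableSingletonClass ι] (μ : Measure 𝒴) [IsProbabilityMeasure μ]
    {g : 𝒴 → ι} (hg : Measurable g) :
    ∃ j, μ.real (g ⁻¹' {j}) ≤ 1 / Fintype.card ι := by
  have hsum : ∑ j, μ.real (g ⁻¹' {j}) = ∑ _ : ι, (1 / Fintype.card ι : ℝ) := by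
    rw [sum_measureReal_preimage_singleton _ fun j _ => hg (measurableSet_singleton j)]
    simp
  obtain ⟨j, -, hj⟩ := Finset.exists_le_of_sum_le Finset.univ_nonempty hsum.le
  exact ⟨j, hj⟩

end

theorem metaconverse_general
    {𝒳 𝒴 : Type*} [MeasurableSpace 𝒳] [MeasurableSpace 𝒴]
    (κ : Kernel 𝒳 𝒴) [IsMarkovKernel κ]
    (QY : Measure 𝒴) [IsProbabilityMeasure QY]
    (M : ℕ) (hM : 0 < M) (ε : ℝ) (hε : 0 < ε)
    (f : Fin M → 𝒳) (g : 𝒴 → Fin M) (hg : Measurable g)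
    (h_err : ∀ j : Fin M, (κ (f j)) {y | g y ≠ j} ≤ ENNReal.ofReal ε) :
    ⨅ j : Fin M, betaFn (1 - ε) (κ (f j)) QY ≤ 1 / M := by
  have : Nonempty (Fin M) := Fin.pos_iff_nonempty.mp hM
  obtain ⟨j, hj⟩ := exists_measureReal_preimage_singleton_le QY hg
  have hs : MeasurableSet (g ⁻¹' {j}) := hg (measurableSet_singleton j)
  calc ⨅ j, betaFn (1 - ε) (κ (f j)) QY
      ≤ betaFn (1 - ε) (κ (f j)) QY :=
        ciInf_le ⟨0, Set.forall_mem_range.2 fun _ => betaFn_nonneg _ _ _⟩ j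
    _ ≤ QY.real (g ⁻¹' {j}) :=
        betaFn_le_measureReal hs (one_sub_le_measureReal_of_measure_compl_le hs hε.le (h_err j))
    _ ≤ 1 / M := by simpa using hj

/-- metaconverse bound: every code with `M` messages and maximal
error probability `ε` for the channel `P_{Y|X}` satisfies, for any auxiliary output
distribution `Q_Y`, `inf_j β_{1−ε}(P_{Y|X=f(j)}, Q_Y) ≤ 1/M`. -/
theorem metaconverse
    {𝒳 𝒴 : Type*} [MeasurableSpace 𝒳] [MeasurableSpace 𝒴]
    [StandardBorelSpace 𝒳] [StandardBorelSpace 𝒴]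
    (κ : Kernel 𝒳 𝒴) [IsMarkovKernel κ]
    (QY : Measure 𝒴) [IsProbabilityMeasure QY]
    (M : ℕ) (hM : 0 < M) (ε : ℝ) (hε : 0 < ε) (hε1 : ε < 1)
    (f : Fin M → 𝒳) (g : 𝒴 → Fin M) (hg : Measurable g)
    (h_err : ∀ j : Fin M, (κ (f j)) {y | g y ≠ j} ≤ ENNReal.ofReal ε) :
    ⨅ j : Fin M, betaFn (1 - ε) (κ (f j)) QY ≤ 1 / M :=
  metaconverse_general κ QY M hM ε hε f g hg h_err
end
end
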